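/- Let V be a finite-dimensional real inner product space and let α_1, …, α_{n−1}, β ∈ V be linearly independent vectors such that (α_j | β) > 0 for some fixed j ∈ {1,…,n−1}. Then there exists y ∈ V with (y | α_i) > 0 for all i ∈ {1,…,n−1}, (y | β) = 0, and (y | s_{α_j}(β)) < 0. -/

import Mathlib

open RealInnerProductSpace

/-- The orthogonal reflection in the hyperplane `α^⊥`, given by the formula
`s_α(v) = v − (2(α|v)/(α|α)) • α`. -/
noncomputable def sFun {V : Type*} [NormedAddCommGroup V] [InnerProductSpace ℝ V]
    (α v : V) : V :=
  v - (2 * ⟪α, v⟫ / ⟪α, α⟫) • α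

/-! Since `β` and the `α i` are linearly independent, the values of `⟪y, ·⟫` on them can be
prescribed freely; take `⟪y, β⟫ = 0` and `⟪y, α i⟫ = 1`. Then
`⟪y, s_{α j} β⟫ = -2 ⟪α j, β⟫ / ‖α j‖² < 0`. -/

theorem LinearIndependent.exists_inner_eq {ι V : Type*} [NormedAddCommGroup V]
    [InnerProductSpace ℝ V] [FiniteDimensional ℝ V] {v : ι → V}
    (hv : LinearIndependent ℝ v) (c : ι → ℝ) : ∃ y : V, ∀ i, ⟪y, v i⟫ = c i := by
  obtain ⟨f, hf⟩ := (Finsupp.linearCombination ℝ c ∘ₗ hv.repr).exists_extend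
  refine ⟨(InnerProductSpace.toDual ℝ V).symm (LinearMap.toContinuousLinearMap f), fun i => ?_⟩
  have := LinearMap.congr_fun hf ⟨v i, Submodule.subset_span (Set.mem_range_self i)⟩
  simpa [hv.repr_eq_single i] using this

theorem stmt_14 {V : Type*} [NormedAddCommGroup V] [InnerProductSpace ℝ V]
    [FiniteDimensional ℝ V] (k : ℕ) (α : Fin k → V) (β : V)
    (hli : LinearIndependent ℝ (Fin.cons β α : Fin (k + 1) → V))
    (j : Fin k) (hj : 0 < ⟪α j, β⟫) :
    ∃ y : V, (∀ i, 0 < ⟪y, α i⟫) ∧ ⟪y, β⟫ = 0 ∧ ⟪y, sFun (α j) β⟫ < 0 := by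
  obtain ⟨y, hy⟩ := hli.exists_inner_eq (Fin.cons 0 fun _ => 1)
  have hyβ : ⟪y, β⟫ = 0 := by simpa using hy 0
  have hyα : ∀ i, ⟪y, α i⟫ = 1 := fun i => by simpa using hy i.succ
  refine ⟨y, fun i => by simp [hyα], hyβ, ?_⟩
  have hαj : 0 < ⟪α j, α j⟫ := real_inner_self_pos.2 fun h => by simp [h] at hj
  have hcoeff : 0 < 2 * ⟪α j, β⟫ / ⟪α j, α j⟫ := by positivity
  rw [sFun, inner_sub_right, real_inner_smul_right, hyβ, hyα]
  linarith
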